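/- Let n ≥ 1, s ∈ ℝ, λ ∈ ℝ, and let U = {x ∈ ℝ^{n+1} : x ≠ (s,0,…,0)}. Set Q(x) = (s - x₀)² + Σ_{i=1}^n x_i² and define f₀(x) = (s - x₀)·Q(x)^{-λ} and f_j(x) = x_j·Q(x)^{-λ} for j = 1,…,n (real powers). Then for every x ∈ U: ∂_{x₀}f_j(x) + ∂_{x_j}f₀(x) = 0 for j = 1,…,n; ∂_{x_i}f_j(x) - ∂_{x_j}f_i(x) = 0 for 1 ≤ i < j ≤ n; and ∂_{x₀}f₀(x) - Σ_{i=1}^n ∂_{x_i}f_i(x) = (2λ - (n+1))·Q(x)^{-λ}. Consequently (f₀,…,f_n) satisfies the Riesz system on U if and only if λ = (n+1)/2. -/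

import Mathlib

/-!
Write `c = (s, 0, …, 0)` and `F_j(y) = (y_j - c_j) |y - c|^{-2λ}`, so that
`f = (-F₀, F₁, …, F_n)`. The Jacobian `∂_k F_j = δ_{jk} Q^{-λ} - 2λ (y_j - c_j)(y_k - c_k) Q^{-λ-1}`
is symmetric, which gives `∂₀f_j + ∂_j f₀ = 0` and `∂_i f_j = ∂_j f_i`, and its trace
`(n + 1 - 2λ) Q^{-λ}` is `-(∂₀f₀ - Σ ∂_i f_i)`; as `Q > 0` off `c`, it vanishes iff `2λ = n + 1`.
-/

noncomputable section

open Finset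

/-- Partial derivative of `f : ℝ^{m} → ℝ` in the `i`-th coordinate direction. -/
def pderiv' {m : ℕ} (i : Fin m) (f : (Fin m → ℝ) → ℝ) : (Fin m → ℝ) → ℝ :=
  fun x => fderiv ℝ f x (Pi.single i 1)

section RadialField

variable {m : ℕ}

lemma pderiv'_neg (k : Fin m) (g : (Fin m → ℝ) → ℝ) : pderiv' k (-g) = -pderiv' k g := by
  ext x
  simp [pderiv', fderiv_neg]

/-- Not `dist ^ 2`: `dist` on `Fin m → ℝ` is the sup distance. -/
def sqDist (c y : Fin m → ℝ) : ℝ := ∑ i, (y i - c i) ^ 2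

def radialField (c : Fin m → ℝ) (lam : ℝ) (j : Fin m) (y : Fin m → ℝ) : ℝ :=
  (y j - c j) * sqDist c y ^ (-lam)

lemma sqDist_pos {c x : Fin m → ℝ} (hx : x ≠ c) : 0 < sqDist c x := by
  obtain ⟨i, hi⟩ := Function.ne_iff.mp hx
  have hi' : x i - c i ≠ 0 := sub_ne_zero.mpr hi
  exact sum_pos' (fun j _ => sq_nonneg _) ⟨i, mem_univ i, by positivity⟩

lemma hasFDerivAt_sqDist (c x : Fin m → ℝ) :
    HasFDerivAt (sqDist c)
      (∑ i, (2 * (x i - c i)) • (ContinuousLinearMap.proj i : (Fin m → ℝ) →L[ℝ] ℝ)) x := by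
  unfold sqDist
  refine HasFDerivAt.fun_sum fun i _ => ?_
  simpa using ((hasFDerivAt_apply i x).sub_const (c i)).pow 2

lemma pderiv'_radialField (c : Fin m → ℝ) (lam : ℝ) (j k : Fin m) {x : Fin m → ℝ}
    (hx : x ≠ c) :
    pderiv' k (radialField c lam j) x =
      (if j = k then 1 else 0) * sqDist c x ^ (-lam)
        - 2 * lam * (x j - c j) * (x k - c k) * sqDist c x ^ (-lam - 1) := by
  have hF : HasFDerivAt (radialField c lam j) _ x :=
    ((hasFDerivAt_apply (𝕜 := ℝ) j x).sub_const (c j)).fun_mul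
      ((hasFDerivAt_sqDist c x).rpow_const (p := -lam) (Or.inl (sqDist_pos hx).ne'))
  rw [pderiv', hF.fderiv]
  simp only [add_apply, smul_apply, _root_.sum_apply, ContinuousLinearMap.proj_apply,
    Pi.single_apply, smul_eq_mul, mul_ite, mul_one, mul_zero, sum_ite_eq', mem_univ, if_true,
    ite_mul, one_mul, zero_mul]
  ring

lemma pderiv'_radialField_comm (c : Fin m → ℝ) (lam : ℝ) (j k : Fin m) {x : Fin m → ℝ}
    (hx : x ≠ c) : pderiv' k (radialField c lam j) x = pderiv' j (radialField c lam k) x := by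
  simp only [pderiv'_radialField c lam _ _ hx, eq_comm (a := j)]
  ring

lemma sum_pderiv'_radialField_self (c : Fin m → ℝ) (lam : ℝ) {x : Fin m → ℝ}
    (hx : x ≠ c) :
    ∑ j, pderiv' j (radialField c lam j) x = (m - 2 * lam) * sqDist c x ^ (-lam) := by
  have hQ := (sqDist_pos hx).ne'
  simp only [pderiv'_radialField c lam _ _ hx, if_pos, sum_sub_distrib, ← sum_mul,
    sum_const, card_univ, Fintype.card_fin, mul_assoc, ← mul_sum, ← sq]
  rw [← sqDist, Real.rpow_sub_one hQ]
  field_simp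
  ring

end RadialField

section SignedRadialField

variable {n : ℕ} (c : Fin (n + 1) → ℝ) (lam : ℝ)

def signedRadialField (j : Fin (n + 1)) : (Fin (n + 1) → ℝ) → ℝ :=
  if j = 0 then -radialField c lam 0 else radialField c lam j

lemma pderiv'_signedRadialField_zero_add {x : Fin (n + 1) → ℝ} (hx : x ≠ c) :
    ∀ j ≠ 0,
      pderiv' 0 (signedRadialField c lam j) x + pderiv' j (signedRadialField c lam 0) x = 0 := by
  intro j hj
  simp only [signedRadialField, if_neg hj, if_true, pderiv'_neg, Pi.neg_apply,
    pderiv'_radialField_comm c lam j 0 hx, add_neg_cancel]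

lemma pderiv'_signedRadialField_sub {x : Fin (n + 1) → ℝ} (hx : x ≠ c) :
    ∀ i j, i ≠ 0 → j ≠ 0 →
      pderiv' i (signedRadialField c lam j) x - pderiv' j (signedRadialField c lam i) x = 0 := by
  intro i j hi hj
  simp only [signedRadialField, if_neg hi, if_neg hj, pderiv'_radialField_comm c lam j i hx,
    sub_self]

lemma pderiv'_signedRadialField_div {x : Fin (n + 1) → ℝ} (hx : x ≠ c) :
    pderiv' 0 (signedRadialField c lam 0) x
        - ∑ i ∈ univ.erase 0, pderiv' i (signedRadialField c lam i) x
      = (2 * lam - ((n : ℝ) + 1)) * sqDist c x ^ (-lam) := by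
  have htrace := sum_pderiv'_radialField_self c lam hx
  rw [← add_sum_erase _ _ (mem_univ 0)] at htrace
  rw [sum_congr rfl fun i hi => by rw [signedRadialField, if_neg (ne_of_mem_erase hi)]]
  simp only [signedRadialField, if_true, pderiv'_neg, Pi.neg_apply]
  push_cast at htrace
  linear_combination -htrace

lemma sqDist_single_zero (s : ℝ) (y : Fin (n + 1) → ℝ) :
    sqDist (Pi.single 0 s) y = (s - y 0) ^ 2 + ∑ i ∈ univ.erase 0, y i ^ 2 := by
  rw [sqDist, ← add_sum_erase _ _ (mem_univ 0), Pi.single_eq_same]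
  congr 1
  · ring
  · exact sum_congr rfl fun i hi => by rw [Pi.single_eq_of_ne (ne_of_mem_erase hi), sub_zero]

lemma signedRadialField_single_zero_apply (s : ℝ) (j : Fin (n + 1)) (y : Fin (n + 1) → ℝ) :
    signedRadialField (Pi.single 0 s) lam j y
      = (if j = 0 then s - y 0 else y j) * sqDist (Pi.single 0 s) y ^ (-lam) := by
  by_cases hj : j = 0
  · subst hj
    simp only [signedRadialField, radialField, if_true, Pi.neg_apply, Pi.single_eq_same]
    ring
  · simp only [signedRadialField, radialField, if_neg hj, Pi.single_eq_of_ne hj, sub_zero]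

end SignedRadialField

theorem riesz_system_rpow_iff_sce_exponent_general (n : ℕ) (s lam : ℝ) :
    let Q : (Fin (n + 1) → ℝ) → ℝ :=
      fun x => (s - x 0) ^ 2 + ∑ i ∈ Finset.univ.erase 0, x i ^ 2
    let f : Fin (n + 1) → (Fin (n + 1) → ℝ) → ℝ :=
      fun j y => (if j = 0 then s - y 0 else y j) * (Q y) ^ (-lam)
    (∀ x : Fin (n + 1) → ℝ, x ≠ Pi.single 0 s →
        (∀ j : Fin (n + 1), j ≠ 0 → pderiv' 0 (f j) x + pderiv' j (f 0) x = 0) ∧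
        (∀ i j : Fin (n + 1), i ≠ 0 → j ≠ 0 → i < j →
          pderiv' i (f j) x - pderiv' j (f i) x = 0) ∧
        (pderiv' 0 (f 0) x - ∑ i ∈ Finset.univ.erase 0, pderiv' i (f i) x
          = (2 * lam - ((n : ℝ) + 1)) * (Q x) ^ (-lam))) ∧
    ((∀ x : Fin (n + 1) → ℝ, x ≠ Pi.single 0 s →
        (pderiv' 0 (f 0) x - ∑ i ∈ Finset.univ.erase 0, pderiv' i (f i) x = 0) ∧
        (∀ j : Fin (n + 1), j ≠ 0 → pderiv' 0 (f j) x + pderiv' j (f 0) x = 0) ∧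
        (∀ i j : Fin (n + 1), i ≠ 0 → j ≠ 0 → i < j →
          pderiv' i (f j) x - pderiv' j (f i) x = 0))
      ↔ lam = ((n : ℝ) + 1) / 2) := by
  intro Q f
  set c : Fin (n + 1) → ℝ := Pi.single 0 s
  have hQ : Q = sqDist c := funext fun y => (sqDist_single_zero s y).symm
  have hf : f = signedRadialField c lam := by
    ext j y
    simp only [f, hQ, c, signedRadialField_single_zero_apply]
  clear_value Q f
  subst hQ hf
  have hmain := fun x (hx : x ≠ c) =>
    And.intro (pderiv'_signedRadialField_zero_add c lam hx)
      (And.intro (fun i j hi hj (_ : i < j) => pderiv'_signedRadialField_sub c lam hx i j hi hj)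
        (pderiv'_signedRadialField_div c lam hx))
  refine ⟨hmain, fun h => ?_, fun hlam x hx => ?_⟩
  · obtain ⟨x, hx⟩ := exists_ne c
    have hdiv := (hmain x hx).2.2
    rw [(h x hx).1, eq_comm, mul_eq_zero] at hdiv
    have hpow : sqDist c x ^ (-lam) ≠ 0 := (Real.rpow_pos_of_pos (sqDist_pos hx) _).ne'
    linarith [hdiv.resolve_right hpow]
  · obtain ⟨hcurl₀, hcurl, hdiv⟩ := hmain x hx
    exact ⟨by rw [hdiv, hlam]; ring, hcurl₀, hcurl⟩

/-- For `s, λ ∈ ℝ`, `Q(x) = (s - x₀)² + Σ_{i=1}^n x_i²`,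
`f₀(x) = (s - x₀)Q(x)^{-λ}` and `f_j(x) = x_j Q(x)^{-λ}` (real powers), on
`U = {x ∈ ℝ^{n+1} : x ≠ (s,0,…,0)}` we have `∂₀f_j + ∂_j f₀ = 0`,
`∂_i f_j - ∂_j f_i = 0` for `1 ≤ i < j ≤ n`, and
`∂₀f₀ - Σ_{i=1}^n ∂_i f_i = (2λ - (n+1))Q^{-λ}`; consequently `(f₀,…,f_n)` satisfies the
Riesz system on `U` iff `λ = (n+1)/2`. -/
theorem riesz_system_rpow_iff_sce_exponent (n : ℕ) (hn : 1 ≤ n) (s lam : ℝ) :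
    let Q : (Fin (n + 1) → ℝ) → ℝ :=
      fun x => (s - x 0) ^ 2 + ∑ i ∈ Finset.univ.erase 0, x i ^ 2
    let f : Fin (n + 1) → (Fin (n + 1) → ℝ) → ℝ :=
      fun j y => (if j = 0 then s - y 0 else y j) * (Q y) ^ (-lam)
    (∀ x : Fin (n + 1) → ℝ, x ≠ Pi.single 0 s →
        (∀ j : Fin (n + 1), j ≠ 0 → pderiv' 0 (f j) x + pderiv' j (f 0) x = 0) ∧
        (∀ i j : Fin (n + 1), i ≠ 0 → j ≠ 0 → i < j →
          pderiv' i (f j) x - pderiv' j (f i) x = 0) ∧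
        (pderiv' 0 (f 0) x - ∑ i ∈ Finset.univ.erase 0, pderiv' i (f i) x
          = (2 * lam - ((n : ℝ) + 1)) * (Q x) ^ (-lam))) ∧
    ((∀ x : Fin (n + 1) → ℝ, x ≠ Pi.single 0 s →
        (pderiv' 0 (f 0) x - ∑ i ∈ Finset.univ.erase 0, pderiv' i (f i) x = 0) ∧
        (∀ j : Fin (n + 1), j ≠ 0 → pderiv' 0 (f j) x + pderiv' j (f 0) x = 0) ∧
        (∀ i j : Fin (n + 1), i ≠ 0 → j ≠ 0 → i < j →
          pderiv' i (f j) x - pderiv' j (f i) x = 0))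
      ↔ lam = ((n : ℝ) + 1) / 2) :=
  riesz_system_rpow_iff_sce_exponent_general n s lam

end
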